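/- arXiv:2111.00072 — 3 statements merged into one kernel-verified Lean document; each statement's English description precedes it below -/
import Mathlib

section
/- Performance difference identity: for any two policies π and π_k on a finite MDP, J(π) - J(π_k) = (1/(1-γ)) E_{s ∼ d^π} E_{a ∼ π(·|s)}[A^{π_k}(s,a)]. -/
open scoped BigOperators

/-- A finite Markov decision process. -/
structure MDP (S A : Type*) [Fintype S] [Fintype A] where
  p : S → A → S → ℝ
  p_nonneg : ∀ s a s', 0 ≤ p s a s'
  p_sum : ∀ s a, ∑ s', p s a s' = 1
  r : S → A → ℝ
  ρ0 : S → ℝ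
  ρ0_nonneg : ∀ s, 0 ≤ ρ0 s
  ρ0_sum : ∑ s, ρ0 s = 1
  γ : ℝ
  γ_pos : 0 < γ
  γ_lt_one : γ < 1

variable {S A : Type*} [Fintype S] [Fintype A]

/-- A (stationary stochastic) policy: a probability distribution over actions at every state. -/
noncomputable def IsPolicy (π : S → A → ℝ) : Prop :=
  (∀ s a, 0 ≤ π s a) ∧ ∀ s, ∑ a, π s a = 1

/-- The state occupancy distribution at time `t`, starting from initial distribution `μ`. -/
noncomputable def stateDistFrom (M : MDP S A) (π : S → A → ℝ) (μ : S → ℝ) : ℕ → S → ℝ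
  | 0 => μ
  | t + 1 => fun s' => ∑ s, ∑ a, stateDistFrom M π μ t s * π s a * M.p s a s'

/-- The normalized discounted state visitation distribution, starting from `μ`. -/
noncomputable def visitFrom (M : MDP S A) (π : S → A → ℝ) (μ : S → ℝ) (s : S) : ℝ :=
  (1 - M.γ) * ∑' t, M.γ ^ t * stateDistFrom M π μ t s

/-- The normalized discounted state visitation distribution `d^π`. -/
noncomputable def visit (M : MDP S A) (π : S → A → ℝ) (s : S) : ℝ :=
  visitFrom M π M.ρ0 s

/-- Expected total discounted reward starting from initial distribution `μ`. -/
noncomputable def Jfrom (M : MDP S A) (π : S → A → ℝ) (μ : S → ℝ) : ℝ :=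
  ∑' t, M.γ ^ t * ∑ s, ∑ a, stateDistFrom M π μ t s * π s a * M.r s a

/-- The performance objective `J(π)`. -/
noncomputable def Jval (M : MDP S A) (π : S → A → ℝ) : ℝ :=
  Jfrom M π M.ρ0

/-- The state value function `V^π(s)`. -/
noncomputable def Vval [DecidableEq S] (M : MDP S A) (π : S → A → ℝ) (s : S) : ℝ :=
  Jfrom M π (fun s' => if s' = s then 1 else 0)

/-- The state-action value function `Q^π(s,a)`. -/
noncomputable def Qval [DecidableEq S] (M : MDP S A) (π : S → A → ℝ) (s : S) (a : A) : ℝ :=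
  M.r s a + M.γ * ∑ s', M.p s a s' * Vval M π s'

/-- The advantage function `A^π(s,a) = Q^π(s,a) - V^π(s)`. -/
noncomputable def Adv [DecidableEq S] (M : MDP S A) (π : S → A → ℝ) (s : S) (a : A) : ℝ :=
  Qval M π s a - Vval M π s

/-- Total variation distance between the action distributions of two policies at state `s`. -/
noncomputable def tvPol (π π' : S → A → ℝ) (s : S) : ℝ :=
  (1 / 2) * ∑ a, |π s a - π' s a|

/-!
Write `d_t` for the state distribution of `π` at time `t` and `V = V^{π_k}`. Averaging the
advantage over `π` gives `∑_a π(a|s) r(s,a) + γ (P_π V)(s) - V(s)`, where `P_π` is the one-step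
transition operator of `π`. Since `E_{d_{t+1}} V = E_{d_t} (P_π V)`, the discounted sum of
`E_{d_t}[γ P_π V - V]` telescopes to `-E_{ρ₀} V = -J(π_k)`, while the discounted sum of the
expected rewards is `J(π)`; here `J(π_k) = E_{ρ₀} V` because state occupancies are linear in the
initial distribution. The factor `1/(1-γ)` undoes the normalisation of `d^π`.
-/

theorem Summable.tsum_succ_sub {G : Type*} [AddCommGroup G] [TopologicalSpace G]
    [IsTopologicalAddGroup G] [T2Space G] {f : ℕ → G} (hf : Summable f) :
    ∑' t, (f (t + 1) - f t) = -f 0 := by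
  rw [((summable_nat_add_iff 1).2 hf).tsum_sub hf, hf.tsum_eq_zero_add]
  abel

theorem summable_pow_mul_of_abs_le {γ C : ℝ} (h0 : 0 ≤ γ) (h1 : γ < 1) {f : ℕ → ℝ}
    (hf : ∀ t, |f t| ≤ C) : Summable fun t => γ ^ t * f t := by
  refine ((summable_geometric_of_lt_one h0 h1).mul_right C).of_norm_bounded fun t => ?_
  rw [Real.norm_eq_abs, abs_mul, abs_pow, abs_of_nonneg h0]
  exact mul_le_mul_of_nonneg_left (hf t) (by positivity)

def IsDistribution (μ : S → ℝ) : Prop :=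
  (∀ s, 0 ≤ μ s) ∧ ∑ s, μ s = 1

theorem MDP.isDistribution_ρ0 (M : MDP S A) : IsDistribution M.ρ0 :=
  ⟨M.ρ0_nonneg, M.ρ0_sum⟩

theorem isDistribution_indicator [DecidableEq S] (s₀ : S) :
    IsDistribution fun s : S => if s = s₀ then (1 : ℝ) else 0 :=
  ⟨fun s => by positivity, by simp⟩

theorem IsDistribution.le_one {μ : S → ℝ} (hμ : IsDistribution μ) (s : S) : μ s ≤ 1 :=
  (Finset.single_le_sum (fun s' _ => hμ.1 s') (Finset.mem_univ s)).trans_eq hμ.2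

theorem IsDistribution.abs_mul_le {μ : S → ℝ} (hμ : IsDistribution μ) (s : S) (x : ℝ) :
    |μ s * x| ≤ |x| := by
  rw [abs_mul, abs_of_nonneg (hμ.1 s)]
  exact mul_le_of_le_one_left (abs_nonneg _) (hμ.le_one s)

theorem IsDistribution.abs_sum_mul_le {μ : S → ℝ} (hμ : IsDistribution μ) (v : S → ℝ) :
    |∑ s, μ s * v s| ≤ ∑ s, |v s| :=
  (Finset.abs_sum_le_sum_abs _ _).trans (Finset.sum_le_sum fun s _ => hμ.abs_mul_le s (v s))

/-- The one-step transition operator `P_π` of `π`, acting on state functions. -/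
noncomputable def expectedNext (M : MDP S A) (π : S → A → ℝ) (v : S → ℝ) (s : S) : ℝ :=
  ∑ a, π s a * ∑ s', M.p s a s' * v s'

noncomputable def discountedSum (M : MDP S A) (π : S → A → ℝ) (μ : S → ℝ) (v : S → ℝ) : ℝ :=
  ∑' t, M.γ ^ t * ∑ s, stateDistFrom M π μ t s * v s

section Trajectory

variable (M : MDP S A) {π : S → A → ℝ} {μ : S → ℝ}

theorem sum_stateDistFrom_succ_mul (π : S → A → ℝ) (μ : S → ℝ) (v : S → ℝ) (t : ℕ) :
    ∑ s', stateDistFrom M π μ (t + 1) s' * v s'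
      = ∑ s, stateDistFrom M π μ t s * expectedNext M π v s := by
  simp only [stateDistFrom, expectedNext, Finset.sum_mul, Finset.mul_sum]
  rw [Finset.sum_comm]
  refine Finset.sum_congr rfl fun s _ => ?_
  rw [Finset.sum_comm]
  exact Finset.sum_congr rfl fun a _ => Finset.sum_congr rfl fun s' _ => by ring

theorem expectedNext_const (hπ : IsPolicy π) (c : ℝ) (s : S) :
    expectedNext M π (fun _ => c) s = c := by
  simp [expectedNext, ← Finset.sum_mul, M.p_sum, hπ.2 s]

theorem isDistribution_stateDistFrom (hπ : IsPolicy π) (hμ : IsDistribution μ) (t : ℕ) :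
    IsDistribution (stateDistFrom M π μ t) := by
  induction t with
  | zero => exact hμ
  | succ t ih =>
    refine ⟨fun s' => Finset.sum_nonneg fun s _ => Finset.sum_nonneg fun a _ => ?_, ?_⟩
    · have := ih.1 s; have := hπ.1 s a; have := M.p_nonneg s a s'
      positivity
    · simpa [expectedNext_const M hπ, ih.2] using
        sum_stateDistFrom_succ_mul M π μ (fun _ => 1) t

theorem summable_discounted (hπ : IsPolicy π) (hμ : IsDistribution μ) (v : S → ℝ) :
    Summable fun t => M.γ ^ t * ∑ s, stateDistFrom M π μ t s * v s :=
  summable_pow_mul_of_abs_le M.γ_pos.le M.γ_lt_one fun t =>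
    (isDistribution_stateDistFrom M hπ hμ t).abs_sum_mul_le v

theorem Jfrom_eq_discountedSum (π : S → A → ℝ) (μ : S → ℝ) :
    Jfrom M π μ = discountedSum M π μ fun s => ∑ a, π s a * M.r s a := by
  simp only [Jfrom, discountedSum, Finset.mul_sum, mul_assoc]

theorem discountedSum_add (hπ : IsPolicy π) (hμ : IsDistribution μ) (v w : S → ℝ) :
    discountedSum M π μ (fun s => v s + w s) = discountedSum M π μ v + discountedSum M π μ w := by
  rw [discountedSum, discountedSum, discountedSum,
    ← (summable_discounted M hπ hμ v).tsum_add (summable_discounted M hπ hμ w)]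
  simp only [mul_add, Finset.sum_add_distrib]

theorem discountedSum_bellman_residual (hπ : IsPolicy π) (hμ : IsDistribution μ) (v : S → ℝ) :
    discountedSum M π μ (fun s => M.γ * expectedNext M π v s - v s) = -∑ s, μ s * v s := by
  have hstep : ∀ t, M.γ ^ t * ∑ s, stateDistFrom M π μ t s * (M.γ * expectedNext M π v s - v s)
      = M.γ ^ (t + 1) * ∑ s, stateDistFrom M π μ (t + 1) s * v s
        - M.γ ^ t * ∑ s, stateDistFrom M π μ t s * v s := by
    intro t
    simp only [sum_stateDistFrom_succ_mul, mul_sub, Finset.sum_sub_distrib, pow_succ,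
      Finset.mul_sum]
    ring_nf
  rw [discountedSum, tsum_congr hstep, (summable_discounted M hπ hμ v).tsum_succ_sub]
  simp [stateDistFrom]

theorem sum_visitFrom_mul (hπ : IsPolicy π) (hμ : IsDistribution μ) (v : S → ℝ) :
    ∑ s, visitFrom M π μ s * v s = (1 - M.γ) * discountedSum M π μ v := by
  have hsummable : ∀ s, Summable fun t => M.γ ^ t * (stateDistFrom M π μ t s * v s) := fun s =>
    summable_pow_mul_of_abs_le M.γ_pos.le M.γ_lt_one fun t =>
      (isDistribution_stateDistFrom M hπ hμ t).abs_mul_le s (v s)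
  simp only [visitFrom, discountedSum, mul_assoc, ← tsum_mul_right, Finset.mul_sum]
  rw [← Finset.mul_sum, ← Summable.tsum_finsetSum fun s _ => hsummable s]

theorem stateDistFrom_eq_sum_mul [DecidableEq S] (π : S → A → ℝ) (μ : S → ℝ) (t : ℕ) (s : S) :
    stateDistFrom M π μ t s
      = ∑ s₀, μ s₀ * stateDistFrom M π (fun s' => if s' = s₀ then 1 else 0) t s := by
  induction t generalizing s with
  | zero => simp [stateDistFrom]
  | succ t ih =>
    simp only [stateDistFrom, ih, Finset.sum_mul, Finset.mul_sum]
    conv_rhs => rw [Finset.sum_comm]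
    refine Finset.sum_congr rfl fun s' _ => ?_
    rw [Finset.sum_comm]
    exact Finset.sum_congr rfl fun _ _ => Finset.sum_congr rfl fun _ _ => by ring

theorem discountedSum_eq_sum_mul [DecidableEq S] (hπ : IsPolicy π) (v : S → ℝ) :
    discountedSum M π μ v
      = ∑ s₀, μ s₀ * discountedSum M π (fun s' => if s' = s₀ then 1 else 0) v := by
  have hsummable s₀ := summable_discounted M hπ (isDistribution_indicator s₀) v
  simp only [discountedSum, ← tsum_mul_left]
  rw [← Summable.tsum_finsetSum fun s₀ _ => (hsummable s₀).mul_left (μ s₀)]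
  refine tsum_congr fun t => ?_
  simp only [stateDistFrom_eq_sum_mul M π μ t, Finset.sum_mul, Finset.mul_sum]
  rw [Finset.sum_comm]
  exact Finset.sum_congr rfl fun _ _ => Finset.sum_congr rfl fun _ _ => by ring

theorem Jfrom_eq_sum_mul_Vval [DecidableEq S] (hπ : IsPolicy π) (μ : S → ℝ) :
    Jfrom M π μ = ∑ s, μ s * Vval M π s := by
  simp only [Vval, Jfrom_eq_discountedSum]
  exact discountedSum_eq_sum_mul M hπ _

theorem sum_mul_Adv [DecidableEq S] (hπ : IsPolicy π) (πk : S → A → ℝ) (s : S) :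
    ∑ a, π s a * Adv M πk s a
      = ∑ a, π s a * M.r s a + (M.γ * expectedNext M π (Vval M πk) s - Vval M πk s) := by
  simp only [Adv, Qval, expectedNext, mul_sub, mul_add, Finset.sum_sub_distrib,
    Finset.sum_add_distrib, ← Finset.sum_mul, hπ.2 s, one_mul, Finset.mul_sum, mul_left_comm]
  ring

end Trajectory

/-- Performance difference identity:
`J(π) - J(π_k) = (1/(1-γ)) E_{s ∼ d^π} E_{a ∼ π(·|s)} [A^{π_k}(s,a)]`. -/
theorem performance_difference_identity [DecidableEq S]
    (M : MDP S A) (π πk : S → A → ℝ) (hπ : IsPolicy π) (hπk : IsPolicy πk) :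
    Jval M π - Jval M πk
      = (1 / (1 - M.γ)) * ∑ s, visit M π s * ∑ a, π s a * Adv M πk s a := by
  have hγ : 1 - M.γ ≠ 0 := sub_ne_zero.2 M.γ_lt_one.ne'
  have hρ₀ := M.isDistribution_ρ0
  calc Jval M π - Jval M πk
      = discountedSum M π M.ρ0 (fun s => ∑ a, π s a * M.r s a)
        + discountedSum M π M.ρ0
            (fun s => M.γ * expectedNext M π (Vval M πk) s - Vval M πk s) := by
        rw [Jval, Jval, Jfrom_eq_discountedSum, Jfrom_eq_sum_mul_Vval M hπk,
          discountedSum_bellman_residual M hπ hρ₀, sub_eq_add_neg]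
    _ = discountedSum M π M.ρ0 (fun s => ∑ a, π s a * Adv M πk s a) := by
        simp only [← discountedSum_add M hπ hρ₀, sum_mul_Adv M hπ]
    _ = _ := by
        simp only [visit, sum_visitFrom_mul M hπ hρ₀]
        field_simp
end

section
/- Visitation-distribution TV bound: for any two policies π and π_ref on a finite MDP with discount γ ∈ (0,1), the total variation distance between their normalized discounted state visitation distributions satisfies TV(d^π, d^{π_ref}) ≤ (γ/(1-γ)) E_{s ∼ d^{π_ref}}[TV(π, π_ref)(s)]. -/
open scoped BigOperators

variable {S A : Type*} [Fintype S] [Fintype A]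

/-!
The discounted visitation distribution solves `d = (1 - γ) ρ₀ + γ Pᵀ (d ⊗ π)`, where
`(d ⊗ π)(s, a) = d(s) π(a|s)` and `P` is the transition kernel. Hence
`Δ = d^π - d^{π_ref} = γ Pᵀ (d^π ⊗ π - d^{π_ref} ⊗ π_ref)`. As `P` is stochastic it does not
increase `ℓ¹` norms, and `d^π ⊗ π - d^{π_ref} ⊗ π_ref = Δ ⊗ π + d^{π_ref} ⊗ (π - π_ref)` gives
`‖Δ‖₁ ≤ γ ‖Δ‖₁ + 2 γ E_{d^{π_ref}}[TV(π, π_ref)]`, which rearranges to the bound.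
-/

open Finset

section Visitation

variable (M : MDP S A) {π : S → A → ℝ} {μ : S → ℝ}

lemma stateDistFrom_nonneg (hπ : IsPolicy π) (hμ : ∀ s, 0 ≤ μ s) :
    ∀ t s, 0 ≤ stateDistFrom M π μ t s
  | 0, s => hμ s
  | t + 1, s' => sum_nonneg fun s _ => sum_nonneg fun a _ =>
      mul_nonneg (mul_nonneg (stateDistFrom_nonneg hπ hμ t s) (hπ.1 s a)) (M.p_nonneg s a s')

lemma sum_stateDistFrom (hπ : IsPolicy π) (t : ℕ) :
    ∑ s, stateDistFrom M π μ t s = ∑ s, μ s := by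
  induction t with
  | zero => rfl
  | succ t ih =>
    calc ∑ s', ∑ s, ∑ a, stateDistFrom M π μ t s * π s a * M.p s a s'
        = ∑ s, ∑ a, stateDistFrom M π μ t s * π s a * ∑ s', M.p s a s' := by
          rw [sum_comm]; simp only [mul_sum]; exact sum_congr rfl fun _ _ => sum_comm
      _ = ∑ s, μ s := by simp only [M.p_sum, mul_one, ← mul_sum, hπ.2, ih]

lemma summable_discounted_stateDistFrom (hπ : IsPolicy π) (hμ : ∀ s, 0 ≤ μ s) (s : S) :
    Summable fun t => M.γ ^ t * stateDistFrom M π μ t s := by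
  have hγ := M.γ_pos.le
  refine Summable.of_nonneg_of_le
    (fun t => mul_nonneg (pow_nonneg hγ t) (stateDistFrom_nonneg M hπ hμ t s))
    (fun t => mul_le_mul_of_nonneg_left ?_ (pow_nonneg hγ t))
    ((summable_geometric_of_lt_one hγ M.γ_lt_one).mul_right (∑ s, μ s))
  rw [← sum_stateDistFrom M hπ t]
  exact single_le_sum (fun s _ => stateDistFrom_nonneg M hπ hμ t s) (mem_univ s)

lemma visitFrom_nonneg (hπ : IsPolicy π) (hμ : ∀ s, 0 ≤ μ s) (s : S) :
    0 ≤ visitFrom M π μ s :=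
  mul_nonneg (sub_nonneg.2 M.γ_lt_one.le) <| tsum_nonneg fun t =>
    mul_nonneg (pow_nonneg M.γ_pos.le t) (stateDistFrom_nonneg M hπ hμ t s)

lemma visitFrom_eq (hπ : IsPolicy π) (hμ : ∀ s, 0 ≤ μ s) (s' : S) :
    visitFrom M π μ s' =
      (1 - M.γ) * μ s' + M.γ * ∑ s, ∑ a, visitFrom M π μ s * π s a * M.p s a s' := by
  have hsum := summable_discounted_stateDistFrom M hπ hμ
  have hshift : ∑' t, M.γ ^ t * stateDistFrom M π μ t s' =
      μ s' + M.γ * ∑ s, ∑ a, (∑' t, M.γ ^ t * stateDistFrom M π μ t s) * π s a * M.p s a s' := by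
    have hstep : ∀ t, M.γ ^ (t + 1) * stateDistFrom M π μ (t + 1) s' =
        M.γ * ∑ s, ∑ a, M.γ ^ t * stateDistFrom M π μ t s * π s a * M.p s a s' := fun t => by
      simp only [stateDistFrom, mul_sum]
      exact sum_congr rfl fun _ _ => sum_congr rfl fun _ _ => by ring
    rw [(hsum s').tsum_eq_zero_add, tsum_congr hstep, tsum_mul_left,
      Summable.tsum_finsetSum fun s _ => summable_sum fun a _ =>
        ((hsum s).mul_right _).mul_right _]
    simp only [pow_zero, one_mul, stateDistFrom]
    congr 2
    refine sum_congr rfl fun s _ => ?_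
    rw [Summable.tsum_finsetSum fun a _ => ((hsum s).mul_right _).mul_right _]
    simp only [tsum_mul_right]
  rw [visitFrom, hshift, mul_add, mul_left_comm _ M.γ]
  simp only [mul_sum, visitFrom, mul_assoc]

end Visitation

lemma sum_abs_sum_mul_transition_le (M : MDP S A) (f : S → A → ℝ) :
    ∑ s', |∑ s, ∑ a, f s a * M.p s a s'| ≤ ∑ s, ∑ a, |f s a| :=
  calc ∑ s', |∑ s, ∑ a, f s a * M.p s a s'|
      ≤ ∑ s', ∑ s, ∑ a, |f s a| * M.p s a s' :=
        sum_le_sum fun s' _ => (abs_sum_le_sum_abs _ _).trans <| sum_le_sum fun s _ =>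
          (abs_sum_le_sum_abs _ _).trans_eq <| sum_congr rfl fun a _ => by
            rw [abs_mul, abs_of_nonneg (M.p_nonneg s a s')]
    _ = ∑ s, ∑ a, |f s a| := by
        rw [sum_comm]
        refine sum_congr rfl fun s _ => ?_
        rw [sum_comm]
        simp only [← mul_sum, M.p_sum, mul_one]

lemma sum_abs_mul_sub_mul_le {p q : A → ℝ} (hp : ∀ a, 0 ≤ p a) (hp_sum : ∑ a, p a = 1)
    {x y : ℝ} (hy : 0 ≤ y) :
    ∑ a, |x * p a - y * q a| ≤ |x - y| + y * ∑ a, |p a - q a| :=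
  calc ∑ a, |x * p a - y * q a|
      ≤ ∑ a, (|x - y| * p a + y * |p a - q a|) := sum_le_sum fun a _ => by
        calc |x * p a - y * q a| = |(x - y) * p a + y * (p a - q a)| := by ring_nf
          _ ≤ _ := by
            refine (abs_add_le _ _).trans_eq ?_
            rw [abs_mul, abs_mul, abs_of_nonneg (hp a), abs_of_nonneg hy]
    _ = |x - y| + y * ∑ a, |p a - q a| := by
        rw [sum_add_distrib, ← mul_sum, ← mul_sum, hp_sum, mul_one]

/-- Visitation-distribution TV bound:
`TV(d^π, d^{π_ref}) ≤ (γ/(1-γ)) E_{s ∼ d^{π_ref}}[TV(π, π_ref)(s)]`. -/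
theorem visitation_tv_bound
    (M : MDP S A) (π πref : S → A → ℝ) (hπ : IsPolicy π) (hπref : IsPolicy πref) :
    (1 / 2) * ∑ s, |visit M π s - visit M πref s|
      ≤ (M.γ / (1 - M.γ)) * ∑ s, visit M πref s * tvPol π πref s := by
  set Δ := fun s => visit M π s - visit M πref s
  have hdiff : ∀ s', Δ s' = M.γ *
      ∑ s, ∑ a, (visit M π s * π s a - visit M πref s * πref s a) * M.p s a s' := fun s' => by
    simp only [Δ, visit, visitFrom_eq M hπ M.ρ0_nonneg s', visitFrom_eq M hπref M.ρ0_nonneg s',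
      sub_mul, sum_sub_distrib]
    ring
  have htv : ∀ s, ∑ a, |π s a - πref s a| = 2 * tvPol π πref s := fun s => by
    rw [tvPol]; ring
  have hrec : ∑ s, |Δ s| ≤ M.γ * (∑ s, |Δ s| + 2 * ∑ s, visit M πref s * tvPol π πref s) :=
    calc ∑ s, |Δ s|
        ≤ M.γ * ∑ s, ∑ a, |visit M π s * π s a - visit M πref s * πref s a| := by
          simp only [hdiff, abs_mul, abs_of_pos M.γ_pos, ← mul_sum]
          exact mul_le_mul_of_nonneg_left (sum_abs_sum_mul_transition_le M _) M.γ_pos.le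
      _ ≤ M.γ * ∑ s, (|Δ s| + visit M πref s * ∑ a, |π s a - πref s a|) :=
          mul_le_mul_of_nonneg_left (sum_le_sum fun s _ => sum_abs_mul_sub_mul_le (hπ.1 s) (hπ.2 s)
            (visitFrom_nonneg M hπref M.ρ0_nonneg s)) M.γ_pos.le
      _ = _ := by
          simp only [htv, sum_add_distrib, mul_sum, mul_left_comm _ (2 : ℝ)]
  rw [div_mul_eq_mul_div M.γ, le_div_iff₀ (sub_pos.2 M.γ_lt_one)]
  linarith
end

section
/- Generalized policy improvement lower bound relative to a reference policy: for a current policy π_k, reference policy π_ref, and future policy π (with supp π(·|s) ⊆ supp π_ref(·|s) for all s), J(π) - J(π_k) ≥ (1/(1-γ)) E_{(s,a) ∼ d^{π_ref}}[(π(a|s)/π_ref(a|s)) A^{π_k}(s,a)] - (2γ C^{π,π_k}/(1-γ)^2) E_{s ∼ d^{π_ref}}[TV(π, π_ref)(s)], where C^{π,π_k} = max_s |E_{a∼π(·|s)}[A^{π_k}(s,a)]|. -/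
open scoped BigOperators

variable {S A : Type*} [Fintype S] [Fintype A]

/-! The discounted visitation distribution solves the linear fixed-point equation
`d^π = (1 - γ) ρ₀ + γ d^π P_π`. Pairing it with `V^{π_k}` gives the performance difference
identity `(1 - γ) (J(π) - J(π_k)) = E_{s ∼ d^π} Ā(s)` with `Ā(s) = E_{a ∼ π(s)} A^{π_k}(s, a)`.
Subtracting the equations for `π` and `π_ref`, and using that `P_π` does not increase `ℓ¹` norms,
gives `(1 - γ) ‖d^π - d^{π_ref}‖₁ ≤ 2γ E_{s ∼ d^{π_ref}} TV(π, π_ref)(s)`. Replacing `d^π` by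
`d^{π_ref}` in the identity therefore costs at most `C ‖d^π - d^{π_ref}‖₁`, and on the support of
`π` the importance ratio turns `E_{s ∼ d^{π_ref}} Ā(s)` into the first term of the bound. -/

open Finset Matrix

section RowStochastic

variable {m n : Type*} [Fintype m]

theorem abs_vecMul_apply_le (x : m → ℝ) (R : Matrix m n ℝ) (j : n) :
    |(x ᵥ* R) j| ≤ ∑ i, |x i| * |R i j| :=
  (abs_sum_le_sum_abs _ _).trans_eq (by simp only [abs_mul])

variable [Fintype n]

theorem sum_abs_vecMul_le (x : m → ℝ) (R : Matrix m n ℝ) :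
    ∑ j, |(x ᵥ* R) j| ≤ ∑ i, |x i| * ∑ j, |R i j| := by
  calc ∑ j, |(x ᵥ* R) j| ≤ ∑ j, ∑ i, |x i| * |R i j| :=
        sum_le_sum fun j _ => abs_vecMul_apply_le x R j
    _ = ∑ i, |x i| * ∑ j, |R i j| := by simp only [mul_sum]; exact sum_comm

variable [DecidableEq n] {Q : Matrix n n ℝ}

theorem sum_abs_vecMul_le_of_mem_rowStochastic (hQ : Q ∈ rowStochastic ℝ n) (x : n → ℝ) :
    ∑ j, |(x ᵥ* Q) j| ≤ ∑ i, |x i| := by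
  refine (sum_abs_vecMul_le x Q).trans_eq (sum_congr rfl fun i _ => ?_)
  simp only [abs_of_nonneg (nonneg_of_mem_rowStochastic hQ), sum_row_of_mem_rowStochastic hQ,
    mul_one]

theorem abs_vecMul_apply_le_of_mem_rowStochastic (hQ : Q ∈ rowStochastic ℝ n) (x : n → ℝ)
    (j : n) : |(x ᵥ* Q) j| ≤ ∑ i, |x i| :=
  (abs_vecMul_apply_le x Q j).trans <| sum_le_sum fun _ _ =>
    mul_le_of_le_one_right (abs_nonneg _)
      ((abs_of_nonneg (nonneg_of_mem_rowStochastic hQ)).trans_le (le_one_of_mem_rowStochastic hQ))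

variable {γ : ℝ} (hγ₀ : 0 ≤ γ) (hγ₁ : γ < 1)
include hγ₀ hγ₁

theorem summable_geometric_mul_vecMul_pow (hQ : Q ∈ rowStochastic ℝ n) (x : n → ℝ) (j : n) :
    Summable fun t : ℕ => γ ^ t * (x ᵥ* Q ^ t) j := by
  refine .of_norm_bounded ((summable_geometric_of_lt_one hγ₀ hγ₁).mul_left (∑ i, |x i|))
    fun t => ?_
  rw [Real.norm_eq_abs, abs_mul, abs_pow, abs_of_nonneg hγ₀, mul_comm]
  exact mul_le_mul_of_nonneg_right
    (abs_vecMul_apply_le_of_mem_rowStochastic (pow_mem hQ t) x j) (pow_nonneg hγ₀ t)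

/-- The resolvent identity `∑ γᵗ Qᵗ = 1 + γ (∑ γᵗ Qᵗ) Q`, applied to a row vector. -/
theorem tsum_geometric_mul_vecMul_pow (hQ : Q ∈ rowStochastic ℝ n) (x : n → ℝ) :
    (fun j => ∑' t : ℕ, γ ^ t * (x ᵥ* Q ^ t) j)
      = x + γ • ((fun j => ∑' t : ℕ, γ ^ t * (x ᵥ* Q ^ t) j) ᵥ* Q) := by
  have hsum := summable_geometric_mul_vecMul_pow hγ₀ hγ₁ hQ x
  ext j
  have hstep : ∀ t : ℕ, γ ^ (t + 1) * (x ᵥ* Q ^ (t + 1)) j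
      = ∑ i, γ * (γ ^ t * (x ᵥ* Q ^ t) i * Q i j) := fun t => by
    rw [pow_succ γ, pow_succ Q, ← vecMul_vecMul, vecMul, dotProduct, mul_sum]
    exact sum_congr rfl fun i _ => by ring
  rw [(hsum j).tsum_eq_zero_add, pow_zero, pow_zero, one_mul, vecMul_one, tsum_congr hstep,
    Summable.tsum_finsetSum fun i _ => ((hsum i).mul_right _).mul_left γ]
  simp only [Pi.add_apply, Pi.smul_apply, smul_eq_mul, tsum_mul_left, tsum_mul_right, vecMul,
    dotProduct, mul_sum]

end RowStochastic

section Sums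

variable {ι : Type*} [Fintype ι]

theorem abs_dotProduct_sub_dotProduct_le (u v g : ι → ℝ) :
    |u ⬝ᵥ g - v ⬝ᵥ g| ≤ (⨆ i, |g i|) * ∑ i, |u i - v i| := by
  rw [← sub_dotProduct, mul_sum]
  refine (abs_sum_le_sum_abs _ _).trans (sum_le_sum fun i _ => ?_)
  rw [Pi.sub_apply, abs_mul, mul_comm]
  exact mul_le_mul_of_nonneg_right (le_ciSup (Set.finite_range fun i => |g i|).bddAbove i)
    (abs_nonneg _)

/-- Importance sampling. Where `q a = 0` the hypothesis forces `p a = 0`, so the junk value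
`p a / q a = 0` does no harm. -/
theorem sum_mul_div_mul_eq {p q : ι → ℝ} (hpq : ∀ a, p a ≠ 0 → q a ≠ 0) (f : ι → ℝ) :
    ∑ a, q a * (p a / q a * f a) = ∑ a, p a * f a := by
  refine sum_congr rfl fun a _ => ?_
  by_cases hp : p a = 0
  · simp [hp]
  · rw [← mul_assoc, mul_div_cancel₀ _ (hpq a hp)]

end Sums

namespace MDP

variable (M : MDP S A)

noncomputable def transition (π : S → A → ℝ) : Matrix S S ℝ :=
  Matrix.of fun s s' => ∑ a, π s a * M.p s a s'

noncomputable def policyReward (π : S → A → ℝ) (s : S) : ℝ :=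
  ∑ a, π s a * M.r s a

variable [DecidableEq S] {π : S → A → ℝ}

theorem transition_mem_rowStochastic (hπ : IsPolicy π) : M.transition π ∈ rowStochastic ℝ S := by
  refine mem_rowStochastic_iff_sum.2 ⟨fun s s' => ?_, fun s => ?_⟩
  · exact sum_nonneg fun a _ => mul_nonneg (hπ.1 s a) (M.p_nonneg s a s')
  · simp only [transition, of_apply]
    rw [sum_comm]
    simp only [← mul_sum, M.p_sum, mul_one, hπ.2 s]

theorem stateDistFrom_eq_vecMul (μ : S → ℝ) (t : ℕ) :
    stateDistFrom M π μ t = μ ᵥ* M.transition π ^ t := by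
  induction t with
  | zero => rw [pow_zero, vecMul_one]; rfl
  | succ t ih =>
    ext s'
    rw [pow_succ, ← vecMul_vecMul, ← ih]
    simp only [stateDistFrom, vecMul, dotProduct, transition, of_apply, mul_sum, mul_assoc]

theorem summable_stateDistFrom (hπ : IsPolicy π) (μ : S → ℝ) (s : S) :
    Summable fun t => M.γ ^ t * stateDistFrom M π μ t s := by
  simpa only [stateDistFrom_eq_vecMul] using summable_geometric_mul_vecMul_pow M.γ_pos.le
    M.γ_lt_one (transition_mem_rowStochastic M hπ) μ s

theorem visitFrom_eq_tsum (μ : S → ℝ) :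
    visitFrom M π μ = (1 - M.γ) • fun s => ∑' t : ℕ, M.γ ^ t * (μ ᵥ* M.transition π ^ t) s := by
  ext s
  simp only [visitFrom, stateDistFrom_eq_vecMul, Pi.smul_apply, smul_eq_mul]

/-- The visitation distribution is stationary for the process that restarts from `μ` with
probability `1 - γ` at each step. -/
theorem visitFrom_eq_add_vecMul (hπ : IsPolicy π) (μ : S → ℝ) :
    visitFrom M π μ = (1 - M.γ) • μ + M.γ • (visitFrom M π μ ᵥ* M.transition π) := by
  rw [visitFrom_eq_tsum, smul_vecMul, smul_comm M.γ, ← smul_add,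
    ← tsum_geometric_mul_vecMul_pow M.γ_pos.le M.γ_lt_one (transition_mem_rowStochastic M hπ)]

theorem visitFrom_nonneg (hπ : IsPolicy π) {μ : S → ℝ} (hμ : ∀ s, 0 ≤ μ s) (s : S) :
    0 ≤ visitFrom M π μ s := by
  rw [visitFrom_eq_tsum]
  exact mul_nonneg (sub_nonneg.2 M.γ_lt_one.le) <| tsum_nonneg fun t => mul_nonneg
    (pow_nonneg M.γ_pos.le t)
    (nonneg_vecMul_of_mem_rowStochastic (pow_mem (transition_mem_rowStochastic M hπ) t) hμ s)

theorem visitFrom_eq_vecMul (hπ : IsPolicy π) (μ : S → ℝ) :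
    visitFrom M π μ = μ ᵥ* Matrix.of fun s₀ => visitFrom M π (Pi.single s₀ 1) := by
  ext s
  have hentry (s₀ : S) : Summable fun t => M.γ ^ t * (M.transition π ^ t) s₀ s := by
    simpa only [single_one_vecMul, row_apply] using summable_geometric_mul_vecMul_pow
      M.γ_pos.le M.γ_lt_one (transition_mem_rowStochastic M hπ) (Pi.single s₀ 1) s
  simp only [visitFrom_eq_tsum, single_one_vecMul, row_apply]
  simp only [vecMul, dotProduct, of_apply, Pi.smul_apply, smul_eq_mul, mul_sum]
  rw [Summable.tsum_finsetSum fun i _ =>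
    ((hentry i).mul_left (μ i)).congr fun t => mul_left_comm _ _ _]
  simp only [mul_left_comm (M.γ ^ _) (μ _), tsum_mul_left, mul_sum, mul_left_comm (1 - M.γ)]

theorem one_sub_mul_Jfrom (hπ : IsPolicy π) (μ : S → ℝ) :
    (1 - M.γ) * Jfrom M π μ = visitFrom M π μ ⬝ᵥ M.policyReward π := by
  have hterm (t : ℕ) : M.γ ^ t * ∑ s, ∑ a, stateDistFrom M π μ t s * π s a * M.r s a
      = ∑ s, M.γ ^ t * stateDistFrom M π μ t s * M.policyReward π s := by
    simp only [policyReward, mul_sum, mul_assoc]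
  rw [Jfrom, tsum_congr hterm,
    Summable.tsum_finsetSum fun s _ => (summable_stateDistFrom M hπ μ s).mul_right _]
  simp only [tsum_mul_right]
  simp only [dotProduct, visitFrom, mul_sum, mul_assoc]

theorem Jfrom_eq_dotProduct_Vval (hπ : IsPolicy π) (μ : S → ℝ) :
    Jfrom M π μ = μ ⬝ᵥ Vval M π := by
  have hV : Vval M π = fun s => Jfrom M π (Pi.single s 1) := by
    ext s
    simp only [Vval, ← Pi.single_apply]
  refine mul_left_cancel₀ (sub_pos.2 M.γ_lt_one).ne' ?_
  rw [one_sub_mul_Jfrom M hπ, visitFrom_eq_vecMul M hπ, ← dotProduct_mulVec, hV, ← smul_eq_mul,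
    ← dotProduct_smul]
  congr 1
  ext s₀
  simp only [mulVec, of_apply, Pi.smul_apply, smul_eq_mul, one_sub_mul_Jfrom M hπ]

theorem sum_mul_Adv_eq (hπ : IsPolicy π) (πk : S → A → ℝ) :
    (fun s => ∑ a, π s a * Adv M πk s a)
      = M.policyReward π + M.γ • (M.transition π *ᵥ Vval M πk) - Vval M πk := by
  ext s
  have hV : ∑ a, π s a * Vval M πk s = Vval M πk s := by rw [← sum_mul, hπ.2 s, one_mul]
  simp only [Adv, mul_sub, sum_sub_distrib, hV, Qval, mul_add, sum_add_distrib, Pi.add_apply,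
    Pi.sub_apply, Pi.smul_apply, smul_eq_mul, policyReward, mulVec, dotProduct, transition,
    of_apply, mul_sum, sum_mul]
  rw [sum_comm]
  simp only [mul_left_comm, mul_assoc]

/-- The performance difference lemma. -/
theorem one_sub_mul_Jval_sub (hπ : IsPolicy π) {π' : S → A → ℝ} (hπ' : IsPolicy π') :
    (1 - M.γ) * (Jval M π - Jval M π')
      = visit M π ⬝ᵥ fun s => ∑ a, π s a * Adv M π' s a := by
  have hJ := one_sub_mul_Jfrom M hπ M.ρ0
  have hJ' := Jfrom_eq_dotProduct_Vval M hπ' M.ρ0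
  have hd := congrArg (· ⬝ᵥ Vval M π') (visitFrom_eq_add_vecMul M hπ M.ρ0)
  simp only [add_dotProduct, smul_dotProduct, smul_eq_mul] at hd
  rw [sum_mul_Adv_eq M hπ, Jval, Jval, show visit M π = visitFrom M π M.ρ0 from rfl]
  simp only [dotProduct_add, dotProduct_sub, dotProduct_smul, dotProduct_mulVec, smul_eq_mul]
  linear_combination hJ - (1 - M.γ) * hJ' + hd

omit [DecidableEq S] in
theorem sum_abs_transition_sub_le (π π' : S → A → ℝ) (s : S) :
    ∑ j, |(M.transition π - M.transition π') s j| ≤ 2 * tvPol π π' s := by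
  calc ∑ j, |(M.transition π - M.transition π') s j|
      ≤ ∑ j, ∑ a, |π s a - π' s a| * M.p s a j := sum_le_sum fun j _ => by
        simp only [transition, Matrix.sub_apply, of_apply, ← sum_sub_distrib, ← sub_mul]
        exact (abs_sum_le_sum_abs _ _).trans_eq
          (sum_congr rfl fun a _ => by rw [abs_mul, abs_of_nonneg (M.p_nonneg s a j)])
    _ = 2 * tvPol π π' s := by
        rw [sum_comm, tvPol]
        simp only [← mul_sum, M.p_sum, mul_one]
        ring

theorem one_sub_mul_sum_abs_visit_sub_le {π' : S → A → ℝ} (hπ : IsPolicy π) (hπ' : IsPolicy π') :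
    (1 - M.γ) * ∑ s, |visit M π s - visit M π' s|
      ≤ 2 * M.γ * ∑ s, visit M π' s * tvPol π π' s := by
  set d := visitFrom M π M.ρ0
  set d' := visitFrom M π' M.ρ0
  set P := M.transition π
  set P' := M.transition π'
  have hΔ : d - d' = M.γ • ((d - d') ᵥ* P + d' ᵥ* (P - P')) := by
    calc d - d' = ((1 - M.γ) • M.ρ0 + M.γ • (d ᵥ* P)) - ((1 - M.γ) • M.ρ0 + M.γ • (d' ᵥ* P')) := by
          rw [← visitFrom_eq_add_vecMul M hπ, ← visitFrom_eq_add_vecMul M hπ']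
      _ = M.γ • ((d - d') ᵥ* P + d' ᵥ* (P - P')) := by
          rw [sub_vecMul, vecMul_sub]
          module
  have hd' : ∀ s, 0 ≤ d' s := visitFrom_nonneg M hπ' M.ρ0_nonneg
  have hstep : ∑ s, |(d' ᵥ* (P - P')) s| ≤ 2 * ∑ s, d' s * tvPol π π' s := by
    refine (sum_abs_vecMul_le d' (P - P')).trans ?_
    rw [mul_sum]
    exact sum_le_sum fun s _ => by
      rw [abs_of_nonneg (hd' s), mul_left_comm]
      exact mul_le_mul_of_nonneg_left (sum_abs_transition_sub_le M π π' s) (hd' s)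
  have hL1 : ∑ s, |(d - d') s| ≤ M.γ * (∑ s, |(d - d') s| + 2 * ∑ s, d' s * tvPol π π' s) := by
    calc ∑ s, |(d - d') s|
        = M.γ * ∑ s, |((d - d') ᵥ* P + d' ᵥ* (P - P')) s| := by
          conv_lhs => rw [hΔ]
          simp only [Pi.smul_apply, smul_eq_mul, abs_mul, abs_of_nonneg M.γ_pos.le, mul_sum]
      _ ≤ M.γ * (∑ s, |(d - d') s| + 2 * ∑ s, d' s * tvPol π π' s) := by
          refine mul_le_mul_of_nonneg_left ?_ M.γ_pos.le
          calc ∑ s, |((d - d') ᵥ* P + d' ᵥ* (P - P')) s|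
              ≤ ∑ s, (|((d - d') ᵥ* P) s| + |(d' ᵥ* (P - P')) s|) :=
                sum_le_sum fun s _ => abs_add_le _ _
            _ ≤ _ := by
                rw [sum_add_distrib]
                exact add_le_add (sum_abs_vecMul_le_of_mem_rowStochastic
                  (transition_mem_rowStochastic M hπ) _) hstep
  change (1 - M.γ) * ∑ s, |(d - d') s| ≤ 2 * M.γ * ∑ s, d' s * tvPol π π' s
  linarith

end MDP

theorem policy_improvement_lower_bound_ref_general [DecidableEq S]
    (M : MDP S A) (π πk πref : S → A → ℝ)
    (hπ : IsPolicy π) (hπk : IsPolicy πk) (hπref : IsPolicy πref)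
    (hsupp : ∀ s a, π s a ≠ 0 → πref s a ≠ 0) :
    Jval M π - Jval M πk
      ≥ (1 / (1 - M.γ)) *
          (∑ s, ∑ a, (visit M πref s * πref s a) * ((π s a / πref s a) * Adv M πk s a))
        - (2 * M.γ * (⨆ s, |∑ a, π s a * Adv M πk s a|) / (1 - M.γ) ^ 2) *
            ∑ s, visit M πref s * tvPol π πref s := by
  set G : S → ℝ := fun s => ∑ a, π s a * Adv M πk s a
  set C := ⨆ s, |G s|
  have hC : 0 ≤ C := Real.iSup_nonneg fun s => abs_nonneg _
  have hγ : 0 < 1 - M.γ := sub_pos.2 M.γ_lt_one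
  have hIS : ∑ s, ∑ a, (visit M πref s * πref s a) * ((π s a / πref s a) * Adv M πk s a)
      = visit M πref ⬝ᵥ G := by
    simp only [mul_assoc, ← mul_sum, sum_mul_div_mul_eq (hsupp _)]
    rfl
  have hPD := M.one_sub_mul_Jval_sub hπ hπk
  have hshift := abs_dotProduct_sub_dotProduct_le (visit M π) (visit M πref) G
  have hTV := M.one_sub_mul_sum_abs_visit_sub_le hπ hπref
  have key : (1 - M.γ) * (visit M πref ⬝ᵥ G) - 2 * M.γ * C * ∑ s, visit M πref s * tvPol π πref s
      ≤ (1 - M.γ) ^ 2 * (Jval M π - Jval M πk) := by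
    nlinarith [abs_le.1 hshift, mul_le_mul_of_nonneg_left hTV hC]
  rw [hIS, ge_iff_le]
  calc _ = ((1 - M.γ) * (visit M πref ⬝ᵥ G) - 2 * M.γ * C * ∑ s, visit M πref s * tvPol π πref s)
        / (1 - M.γ) ^ 2 := by field_simp
    _ ≤ _ := by rwa [div_le_iff₀' (pow_pos hγ 2)]

/-- Policy improvement lower bound relative to a reference policy:
`J(π) - J(π_k) ≥ (1/(1-γ)) E_{(s,a)∼d^{π_ref}}[(π/π_ref) A^{π_k}]
  - (2γ C^{π,π_k}/(1-γ)^2) E_{s∼d^{π_ref}}[TV(π,π_ref)(s)]`,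
where `C^{π,π_k} = max_s |E_{a∼π(·|s)}[A^{π_k}(s,a)]|`. -/
theorem policy_improvement_lower_bound_ref [DecidableEq S] [Nonempty S]
    (M : MDP S A) (π πk πref : S → A → ℝ)
    (hπ : IsPolicy π) (hπk : IsPolicy πk) (hπref : IsPolicy πref)
    (hsupp : ∀ s a, π s a ≠ 0 → πref s a ≠ 0) :
    Jval M π - Jval M πk
      ≥ (1 / (1 - M.γ)) *
          (∑ s, ∑ a, (visit M πref s * πref s a) * ((π s a / πref s a) * Adv M πk s a))
        - (2 * M.γ * (⨆ s, |∑ a, π s a * Adv M πk s a|) / (1 - M.γ) ^ 2) *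
            ∑ s, visit M πref s * tvPol π πref s :=
  policy_improvement_lower_bound_ref_general M π πk πref hπ hπk hπref hsupp
end
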